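/- arXiv:1410.2861 — 6 statements merged into one kernel-verified Lean document; each statement's English description precedes it below -/
import Mathlib

section
/- Let N ≥ 1 and let c_1, …, c_N ≥ 0 with S := Σ_{n=1}^N c_n > 0. The proportional bandwidth allocation a_n = c_n/S satisfies a_n ≥ 0, Σ_n a_n = 1, and Σ_{n=1}^N a_n·log(1 + c_n/a_n) = log(1 + S); hence, by the Jensen-type bound, it maximizes Σ_n a_n·log(1 + c_n/a_n) over all a_1, …, a_N ≥ 0 with Σ_n a_n = 1. -/
/-!
On the proportional allocation every user gets the same spectral efficiency `log (1 + S)`, so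
the sum rate is `log (1 + S)`. For any other allocation `b`, concavity of `log` gives
`Σ b_n log (1 + c_n / b_n) ≤ log (Σ b_n (1 + c_n / b_n)) ≤ log (1 + S)`.
-/

open Finset Real

variable {ι : Type*} [Fintype ι]

lemma rate_term_eq (b c : ℝ) :
    (if b = 0 then 0 else b * log (1 + c / b)) = b * log (1 + c / b) := by
  split_ifs with hb <;> simp [hb]

lemma rate_term_proportional (c S : ℝ) :
    (if c / S = 0 then 0 else c / S * log (1 + c / (c / S))) = c / S * log (1 + S) := by
  split_ifs with h
  · rw [h, zero_mul]
  · rw [div_div_cancel₀ (div_ne_zero_iff.mp h).1]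

lemma sum_div_sum_self {c : ι → ℝ} (hS : ∑ i, c i ≠ 0) : ∑ n, c n / ∑ i, c i = 1 := by
  rw [← Finset.sum_div, div_self hS]

lemma sum_rate_proportional {c : ι → ℝ} (hS : ∑ i, c i ≠ 0) :
    ∑ n, (if c n / ∑ i, c i = 0 then 0
        else (c n / ∑ i, c i) * log (1 + c n / (c n / ∑ i, c i))) = log (1 + ∑ i, c i) := by
  simp_rw [rate_term_proportional, ← Finset.sum_mul, sum_div_sum_self hS, one_mul]

-- Only an inequality: a term with `b n = 0` is `0` (as `c / 0 = 0`), not `c n`.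
lemma sum_mul_div_le_sum {b c : ι → ℝ} (hc : ∀ n, 0 ≤ c n) :
    ∑ n, b n * (c n / b n) ≤ ∑ n, c n := by
  refine Finset.sum_le_sum fun n _ => ?_
  by_cases hb : b n = 0
  · simp [hb, hc n]
  · rw [mul_div_cancel₀ _ hb]

lemma sum_rate_le_log_one_add_sum {b c : ι → ℝ} (hb : ∀ n, 0 ≤ b n) (hb1 : ∑ n, b n = 1)
    (hc : ∀ n, 0 ≤ c n) :
    ∑ n, (if b n = 0 then 0 else b n * log (1 + c n / b n)) ≤ log (1 + ∑ n, c n) := by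
  have hpoint : ∀ n, 0 < 1 + c n / b n := fun n => by
    have := div_nonneg (hc n) (hb n); linarith
  have hmean : ∑ n, b n * (1 + c n / b n) = 1 + ∑ n, b n * (c n / b n) := by
    simp only [mul_add, mul_one, Finset.sum_add_distrib, hb1]
  have hmean_pos : 0 < ∑ n, b n * (1 + c n / b n) := by
    rw [hmean]
    have := Finset.sum_nonneg fun n (_ : n ∈ univ) => mul_nonneg (hb n) (div_nonneg (hc n) (hb n))
    linarith
  have jensen := strictConcaveOn_log_Ioi.concaveOn.le_map_sum (t := univ)
    (fun n _ => hb n) hb1 (fun n _ => Set.mem_Ioi.mpr (hpoint n))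
  simp only [smul_eq_mul] at jensen
  calc ∑ n, (if b n = 0 then 0 else b n * log (1 + c n / b n))
      = ∑ n, b n * log (1 + c n / b n) := by simp_rw [rate_term_eq]
    _ ≤ log (∑ n, b n * (1 + c n / b n)) := jensen
    _ ≤ log (1 + ∑ n, c n) := by
        refine log_le_log hmean_pos ?_
        rw [hmean]
        linarith [sum_mul_div_le_sum (b := b) hc]

theorem stmt_7_general (N : ℕ) (c : Fin N → ℝ) (hc : ∀ n, 0 ≤ c n)
    (hS : 0 < ∑ n, c n) :
    (∀ n, 0 ≤ c n / ∑ i, c i) ∧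
    (∑ n, c n / ∑ i, c i = 1) ∧
    (∑ n, (if c n / ∑ i, c i = 0 then 0
        else (c n / ∑ i, c i) * Real.log (1 + c n / (c n / ∑ i, c i)))
      = Real.log (1 + ∑ n, c n)) ∧
    (∀ b : Fin N → ℝ, (∀ n, 0 ≤ b n) → (∑ n, b n = 1) →
      ∑ n, (if b n = 0 then 0 else b n * Real.log (1 + c n / b n))
        ≤ ∑ n, (if c n / ∑ i, c i = 0 then 0
            else (c n / ∑ i, c i) * Real.log (1 + c n / (c n / ∑ i, c i)))) := by
  have hS0 : ∑ i, c i ≠ 0 := hS.ne'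
  refine ⟨fun n => div_nonneg (hc n) hS.le, sum_div_sum_self hS0, sum_rate_proportional hS0,
    fun b hb hb1 => ?_⟩
  rw [sum_rate_proportional hS0]
  exact sum_rate_le_log_one_add_sum hb hb1 hc

/-- With `S = Σ c_n > 0`, the proportional allocation `a_n = c_n/S` is a feasible
bandwidth allocation achieving `log(1 + S)`, hence a maximizer of the single-slot
sum rate over the simplex. -/
theorem stmt_7 (N : ℕ) (hN : 1 ≤ N) (c : Fin N → ℝ) (hc : ∀ n, 0 ≤ c n)
    (hS : 0 < ∑ n, c n) :
    (∀ n, 0 ≤ c n / ∑ i, c i) ∧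
    (∑ n, c n / ∑ i, c i = 1) ∧
    (∑ n, (if c n / ∑ i, c i = 0 then 0
        else (c n / ∑ i, c i) * Real.log (1 + c n / (c n / ∑ i, c i)))
      = Real.log (1 + ∑ n, c n)) ∧
    (∀ b : Fin N → ℝ, (∀ n, 0 ≤ b n) → (∑ n, b n = 1) →
      ∑ n, (if b n = 0 then 0 else b n * Real.log (1 + c n / b n))
        ≤ ∑ n, (if c n / ∑ i, c i = 0 then 0
            else (c n / ∑ i, c i) * Real.log (1 + c n / (c n / ∑ i, c i)))) :=
  stmt_7_general N c hc hS
end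

section
/- Let N ≥ 1 and let c_1, …, c_N ≥ 0 with S := Σ_{n=1}^N c_n > 0. If a_1, …, a_N ≥ 0 with Σ_n a_n = 1 achieves Σ_{n=1}^N a_n·log(1 + c_n/a_n) = log(1 + S) (i.e., is a maximizer of the single-slot sum rate over the simplex), then a_n = c_n/S for every n. In particular the maximizer is unique, and a_n = 0 if and only if c_n = 0. -/
/-!
Tangent-line bound: for every `T > 0`, concavity of `log` gives
`a log(1 + c/a) ≤ a log T + (a + c)/T - a`, with equality exactly when `a + c = a T`.
Taking `T = 1 + S` and summing over the simplex, the right-hand sides add up to `log (1 + S)`,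
so a maximizer attains equality in every term, i.e. `c n = a n * S`.
-/

open Real Finset

noncomputable def linkRate (a c : ℝ) : ℝ :=
  if a = 0 then 0 else a * log (1 + c / a)

section TangentBound

variable {a c T : ℝ}

lemma tangentBound_sub_linkRate (ha : 0 < a) (hc : 0 ≤ c) (hT : 0 < T) :
    a * log T + (a + c) / T - a - linkRate a c
      = a * ((a + c) / (a * T) - 1 - log ((a + c) / (a * T))) := by
  have hac : 0 < a + c := by linarith
  have hlog : log ((a + c) / (a * T)) = log (1 + c / a) - log T := by
    rw [← div_div, log_div (div_pos hac ha).ne' hT.ne', add_div, div_self ha.ne']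
  rw [linkRate, if_neg ha.ne', hlog]
  field_simp
  ring

lemma linkRate_le (ha : 0 ≤ a) (hc : 0 ≤ c) (hT : 0 < T) :
    linkRate a c ≤ a * log T + (a + c) / T - a := by
  rcases ha.eq_or_lt with rfl | ha
  · simpa [linkRate] using div_nonneg hc hT.le
  · have hx : 0 < (a + c) / (a * T) := by positivity
    have := tangentBound_sub_linkRate ha hc hT
    nlinarith [log_le_sub_one_of_pos hx]

lemma linkRate_eq_iff (ha : 0 ≤ a) (hc : 0 ≤ c) (hT : 0 < T) :
    linkRate a c = a * log T + (a + c) / T - a ↔ a + c = a * T := by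
  rcases ha.eq_or_lt with rfl | ha
  · simp [linkRate, hT.ne', eq_comm]
  · have hx : 0 < (a + c) / (a * T) := by positivity
    have hgap := tangentBound_sub_linkRate ha hc hT
    constructor
    · intro h
      by_contra hne
      have hx1 : (a + c) / (a * T) ≠ 1 := by
        rwa [ne_eq, div_eq_one_iff_eq (by positivity)]
      nlinarith [log_lt_sub_one_of_pos hx hx1]
    · intro h
      have hx1 : (a + c) / (a * T) = 1 := by rw [h, div_self (by positivity)]
      rw [hx1, log_one] at hgap
      linarith

end TangentBound

lemma eq_mul_sum_of_sum_linkRate_eq {ι : Type*} [Fintype ι] {a c : ι → ℝ}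
    (ha : ∀ n, 0 ≤ a n) (hc : ∀ n, 0 ≤ c n) (hsum : ∑ n, a n = 1)
    (hmax : ∑ n, linkRate (a n) (c n) = log (1 + ∑ n, c n)) (n : ι) :
    c n = a n * ∑ i, c i := by
  set S := ∑ i, c i
  have hT : 0 < 1 + S := by linarith [sum_nonneg fun i (_ : i ∈ univ) ↦ hc i]
  have hbound : ∑ i, (a i * log (1 + S) + (a i + c i) / (1 + S) - a i) = log (1 + S) := by
    rw [sum_sub_distrib, sum_add_distrib, ← sum_mul, ← sum_div, sum_add_distrib, hsum,
      div_self hT.ne']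
    ring
  have hall := (sum_eq_sum_iff_of_le fun i _ ↦ linkRate_le (ha i) (hc i) hT).mp
    (hmax.trans hbound.symm) n (mem_univ n)
  linarith [(linkRate_eq_iff (ha n) (hc n) hT).mp hall]

theorem stmt_8_general (N : ℕ) (c : Fin N → ℝ) (hc : ∀ n, 0 ≤ c n)
    (hS : 0 < ∑ n, c n) (a : Fin N → ℝ) (ha : ∀ n, 0 ≤ a n) (hsum : ∑ n, a n = 1)
    (hmax : ∑ n, (if a n = 0 then 0 else a n * Real.log (1 + c n / a n))
      = Real.log (1 + ∑ n, c n)) :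
    (∀ n, a n = c n / ∑ i, c i) ∧ (∀ n, a n = 0 ↔ c n = 0) := by
  have hcn := eq_mul_sum_of_sum_linkRate_eq ha hc hsum hmax
  refine ⟨fun n ↦ by rw [hcn n, mul_div_cancel_right₀ _ hS.ne'], fun n ↦ ?_⟩
  rw [hcn n, mul_eq_zero, or_iff_left hS.ne']

/-- Uniqueness of the single-slot maximizer: if `a` on the simplex achieves the
value `log(1 + S)` with `S = Σ c_n > 0`, then `a_n = c_n/S` for every `n`; in
particular `a_n = 0` iff `c_n = 0`. -/
theorem stmt_8 (N : ℕ) (hN : 1 ≤ N) (c : Fin N → ℝ) (hc : ∀ n, 0 ≤ c n)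
    (hS : 0 < ∑ n, c n) (a : Fin N → ℝ) (ha : ∀ n, 0 ≤ a n) (hsum : ∑ n, a n = 1)
    (hmax : ∑ n, (if a n = 0 then 0 else a n * Real.log (1 + c n / a n))
      = Real.log (1 + ∑ n, c n)) :
    (∀ n, a n = c n / ∑ i, c i) ∧ (∀ n, a n = 0 ↔ c n = 0) :=
  stmt_8_general N c hc hS a ha hsum hmax
end

section
/- (Theorem 4, bandwidth fitting characterization.) Let N ≥ 1, let c_1, …, c_N ≥ 0 with Σ_n c_n > 0, and let ε > 0 with N·ε < 1. Let a_1, …, a_N satisfy a_n ≥ ε for all n and Σ_n a_n = 1, and set T = {n : a_n > ε} and T̄ = {n : a_n = ε}. Then a maximizes Σ_{n=1}^N a_n·log(1 + c_n/a_n) over {b : Σ_n b_n = 1, b_n ≥ ε for all n} if and only if: (i) for every n ∈ T, a_n = (1 − |T̄|·ε)·c_n / Σ_{i∈T} c_i, and (ii) for every n ∈ T̄, ε ≥ (1 − |T̄|·ε)·c_n / Σ_{i∈T} c_i. -/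
/-!
The rate `x ↦ x log (1 + c/x)` of a user is concave, with derivative `φ (c/x)` where
`φ t = log (1 + t) - t/(1 + t)` is strictly increasing; the tangent-line bound is just
`log u ≤ u - 1`. Hence `a` is optimal exactly when the ratios `c n / a n` share a common level `r`
on the active users `{a n > ε}` and stay below `r` on the others: sufficiency sums the tangent-line
bounds, necessity moves a small amount `δ` of bandwidth from an active user to another one and lets
`δ → 0`. Summing `c n = r * a n` over the active users gives `r = (∑_T c) / (1 - |T̄| ε)`, which turns
the level condition into the stated formulas.
-/

open Finset Real Filter Topology

noncomputable def channelRate (c x : ℝ) : ℝ := x * log (1 + c / x)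

/-- `marginalRate (c / x)` is the derivative of `channelRate c` at `x`. -/
noncomputable def marginalRate (t : ℝ) : ℝ := log (1 + t) - t / (1 + t)

lemma marginalRate_strictMonoOn : StrictMonoOn marginalRate (Set.Ici 0) := by
  intro s (hs : 0 ≤ s) t (ht : 0 ≤ t) hst
  have hlog : log ((1 + s) / (1 + t)) < (1 + s) / (1 + t) - 1 :=
    log_lt_sub_one_of_pos (by positivity) (by rw [Ne, div_eq_one_iff_eq (by positivity)]; linarith)
  rw [log_div (by positivity) (by positivity)] at hlog
  have hfrac : (1 + s) / (1 + t) - 1 ≤ s / (1 + s) - t / (1 + t) := by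
    rw [div_sub_one (by positivity), div_sub_div _ _ (by positivity) (by positivity),
      div_le_div_iff₀ (by positivity) (by positivity)]
    nlinarith [mul_nonneg hs (sub_nonneg.2 hst.le),
      mul_nonneg (mul_nonneg hs ht) (sub_nonneg.2 hst.le)]
  unfold marginalRate
  linarith

lemma channelRate_le_tangent {c x y : ℝ} (hc : 0 ≤ c) (hx : 0 < x) (hy : 0 < y) :
    channelRate c y ≤ channelRate c x + marginalRate (c / x) * (y - x) := by
  set u := (1 + c / y) / (1 + c / x)
  have hu : 0 < u := by positivity
  have hsplit : log (1 + c / y) = log u + log (1 + c / x) := by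
    rw [← log_mul hu.ne' (by positivity), div_mul_cancel₀ _ (by positivity)]
  have hchord : y * (u - 1) = -(c / x / (1 + c / x)) * (y - x) := by
    simp only [u]
    field_simp
    ring
  have hlog : y * log u ≤ y * (u - 1) :=
    mul_le_mul_of_nonneg_left (log_le_sub_one_of_pos hu) hy.le
  unfold channelRate marginalRate
  rw [hsplit]
  linarith

lemma mul_le_mul_of_exchange_le {cx cy x y η : ℝ} (hcx : 0 ≤ cx) (hcy : 0 ≤ cy)
    (hy : 0 < y) (hη : 0 < η) (hηx : η ≤ x)
    (h : ∀ δ ∈ Set.Ioo 0 η,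
      channelRate cx (x - δ) + channelRate cy (y + δ) ≤ channelRate cx x + channelRate cy y) :
    cy * x ≤ cx * y := by
  have hshift : ∀ δ ∈ Set.Ioo 0 η, cy * (x - δ) ≤ cx * (y + δ) := by
    rintro δ ⟨hδ, hδη⟩
    have hxδ : 0 < x - δ := by linarith
    have hyδ : 0 < y + δ := by linarith
    have hx' := channelRate_le_tangent hcx hxδ (show 0 < x by linarith)
    have hy' := channelRate_le_tangent hcy hyδ hy
    rw [sub_sub_cancel] at hx'
    rw [show y - (y + δ) = -δ by ring] at hy'
    have hmarg : marginalRate (cy / (y + δ)) ≤ marginalRate (cx / (x - δ)) :=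
      le_of_mul_le_mul_right (by linarith [h δ ⟨hδ, hδη⟩]) hδ
    rw [← div_le_div_iff₀ hyδ hxδ]
    exact (marginalRate_strictMonoOn.le_iff_le (Set.mem_Ici.2 (by positivity))
      (Set.mem_Ici.2 (by positivity))).1 hmarg
  have hlim : Tendsto (fun δ => cx * (y + δ) - cy * (x - δ)) (𝓝[>] 0) (𝓝 (cx * y - cy * x)) := by
    apply tendsto_nhdsWithin_of_tendsto_nhds
    convert (by fun_prop : Continuous fun δ : ℝ => cx * (y + δ) - cy * (x - δ)).tendsto 0 using 2
    simp
  have := ge_of_tendsto hlim (Filter.mem_of_superset (Ioo_mem_nhdsGT hη)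
    fun δ hδ => sub_nonneg.2 (hshift δ hδ))
  linarith

section

variable {ι : Type*} [Fintype ι]

noncomputable def sumRate (c b : ι → ℝ) : ℝ := ∑ n, channelRate (c n) (b n)

def IsRateOptimal (ε : ℝ) (c a : ι → ℝ) : Prop :=
  ∀ b : ι → ℝ, (∀ n, ε ≤ b n) → ∑ n, b n = 1 → sumRate c b ≤ sumRate c a

def IsWaterLevel (ε : ℝ) (c a : ι → ℝ) (r : ℝ) : Prop :=
  ∀ n, c n ≤ r * a n ∧ (ε < a n → c n = r * a n)

lemma IsRateOptimal.mul_le_mul {ε : ℝ} {c a : ι → ℝ} (hopt : IsRateOptimal ε c a)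
    (hc : ∀ n, 0 ≤ c n) (hε : 0 < ε) (ha : ∀ n, ε ≤ a n) (hsum : ∑ n, a n = 1)
    {n : ι} (hn : ε < a n) (m : ι) : c m * a n ≤ c n * a m := by
  classical
  obtain rfl | hnm := eq_or_ne n m
  · rw [mul_comm]
  refine mul_le_mul_of_exchange_le (hc n) (hc m) (hε.trans_le (ha m)) (sub_pos.2 hn)
    (by linarith) fun δ ⟨hδ, hδη⟩ => ?_
  set b : ι → ℝ := fun i =>
    a i + δ * ((Pi.single m 1 : ι → ℝ) i - (Pi.single n 1 : ι → ℝ) i)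
  have hbn : b n = a n - δ := by simp [b, hnm, sub_eq_add_neg]
  have hbm : b m = a m + δ := by simp [b, hnm.symm]
  have hb : ∀ i, ε ≤ b i := by
    intro i
    obtain rfl | hin := eq_or_ne i n
    · linarith [hbn]
    obtain rfl | him := eq_or_ne i m
    · linarith [hbm, ha i]
    · simp [b, hin, him, ha i]
  have hbsum : ∑ i, b i = 1 := by
    simp [b, sum_add_distrib, ← mul_sum, hsum]
  have hdiff : sumRate c b - sumRate c a =
      (channelRate (c n) (b n) - channelRate (c n) (a n)) +
        (channelRate (c m) (b m) - channelRate (c m) (a m)) := by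
    rw [sumRate, sumRate, ← sum_sub_distrib]
    refine Fintype.sum_eq_add n m hnm fun i ⟨hin, him⟩ => ?_
    simp [b, hin, him]
  rw [← hbn, ← hbm]
  linarith [hopt b hb hbsum]

lemma IsWaterLevel.isRateOptimal {ε r : ℝ} {c a : ι → ℝ} (hr : IsWaterLevel ε c a r)
    (hc : ∀ n, 0 ≤ c n) (hε : 0 < ε) (ha : ∀ n, ε ≤ a n) (hsum : ∑ n, a n = 1) :
    IsRateOptimal ε c a := by
  intro b hb hbsum
  have hterm : ∀ n, channelRate (c n) (b n) ≤
      channelRate (c n) (a n) + marginalRate r * (b n - a n) := by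
    intro n
    have ha0 : 0 < a n := hε.trans_le (ha n)
    refine (channelRate_le_tangent (hc n) ha0 (hε.trans_le (hb n))).trans ?_
    obtain ⟨hle, heq⟩ := hr n
    rcases (ha n).lt_or_eq with hn | hn
    · rw [heq hn, mul_div_cancel_right₀ _ ha0.ne']
    · have hratio : c n / a n ≤ r := (div_le_iff₀ ha0).2 hle
      have hmono : marginalRate (c n / a n) ≤ marginalRate r :=
        marginalRate_strictMonoOn.monotoneOn (div_nonneg (hc n) ha0.le)
          ((div_nonneg (hc n) ha0.le).trans hratio) hratio
      have hgrow : 0 ≤ b n - a n := by linarith [hb n]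
      gcongr
  calc sumRate c b ≤ ∑ n, (channelRate (c n) (a n) + marginalRate r * (b n - a n)) :=
        sum_le_sum fun n _ => hterm n
    _ = sumRate c a := by
      rw [sum_add_distrib, ← mul_sum, sum_sub_distrib, hbsum, hsum, sub_self, mul_zero,
        add_zero, sumRate]

lemma IsRateOptimal.exists_isWaterLevel {ε : ℝ} {c a : ι → ℝ} (hopt : IsRateOptimal ε c a)
    (hc : ∀ n, 0 ≤ c n) (hε : 0 < ε) (ha : ∀ n, ε ≤ a n) (hsum : ∑ n, a n = 1)
    {n : ι} (hn : ε < a n) : ∃ r, IsWaterLevel ε c a r := by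
  have han : 0 < a n := hε.trans hn
  refine ⟨c n / a n, fun m => ⟨?_, fun hm => ?_⟩⟩ <;> rw [div_mul_eq_mul_div]
  · exact (le_div_iff₀ han).2 (hopt.mul_le_mul hc hε ha hsum hn m)
  · rw [eq_div_iff han.ne']
    exact le_antisymm (hopt.mul_le_mul hc hε ha hsum hn m)
      (by linarith [hopt.mul_le_mul hc hε ha hsum hm n])

lemma exists_lt_of_sum_eq_one {ε : ℝ} {a : ι → ℝ} (hsum : ∑ n, a n = 1)
    (hε : Fintype.card ι * ε < 1) : ∃ n, ε < a n := by
  by_contra! h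
  have := sum_le_card_nsmul univ a ε fun n _ => h n
  simp only [hsum, card_univ, nsmul_eq_mul] at this
  linarith

lemma sum_filter_lt_eq_one_sub_card_mul {ε : ℝ} {a : ι → ℝ} (ha : ∀ n, ε ≤ a n)
    (hsum : ∑ n, a n = 1) :
    ∑ i ∈ univ.filter (fun i => ε < a i), a i = 1 - (#(univ.filter fun i => a i = ε) : ℝ) * ε := by
  have hmin : univ.filter (fun i => ¬ ε < a i) = univ.filter fun i => a i = ε :=
    filter_congr fun i _ => by rw [not_lt, le_antisymm_iff, and_iff_left (ha i)]
  have hbar :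
      ∑ i ∈ univ.filter (fun i => a i = ε), a i = #(univ.filter fun i => a i = ε) * ε := by
    rw [sum_congr rfl fun i hi => (mem_filter.1 hi).2, sum_const, nsmul_eq_mul]
  rw [← hsum, ← sum_filter_add_sum_filter_not univ (fun i => ε < a i), hmin, hbar,
    add_sub_cancel_right]

lemma isRateOptimal_iff_exists_isWaterLevel {ε : ℝ} {c a : ι → ℝ} (hc : ∀ n, 0 ≤ c n)
    (hε : 0 < ε) (ha : ∀ n, ε ≤ a n) (hsum : ∑ n, a n = 1) {n : ι} (hn : ε < a n) :
    IsRateOptimal ε c a ↔ ∃ r, IsWaterLevel ε c a r :=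
  ⟨fun hopt => hopt.exists_isWaterLevel hc hε ha hsum hn,
    fun ⟨_, hr⟩ => hr.isRateOptimal hc hε ha hsum⟩

lemma exists_isWaterLevel_iff {ε : ℝ} {c a : ι → ℝ} (hc : ∀ n, 0 ≤ c n) (hcs : 0 < ∑ n, c n)
    (hε : 0 < ε) (ha : ∀ n, ε ≤ a n) (hsum : ∑ n, a n = 1) {n₀ : ι} (hn₀ : ε < a n₀) :
    (∃ r, IsWaterLevel ε c a r) ↔
      ((∀ n ∈ univ.filter (fun i => ε < a i),
          a n = (1 - (#(univ.filter fun i => a i = ε) : ℝ) * ε) * c n /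
            ∑ i ∈ univ.filter (fun i => ε < a i), c i) ∧
       (∀ n ∈ univ.filter (fun i => a i = ε),
          (1 - (#(univ.filter fun i => a i = ε) : ℝ) * ε) * c n /
            ∑ i ∈ univ.filter (fun i => ε < a i), c i ≤ ε)) := by
  rw [← sum_filter_lt_eq_one_sub_card_mul ha hsum]
  set A := ∑ i ∈ univ.filter (fun i => ε < a i), a i
  set S := ∑ i ∈ univ.filter (fun i => ε < a i), c i
  have hA : 0 < A := sum_pos (fun i hi => hε.trans (mem_filter.1 hi).2) ⟨n₀, by simpa⟩
  constructor
  · rintro ⟨r, hr⟩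
    have hr0 : 0 < r := hcs.trans_le <| calc
      ∑ n, c n ≤ ∑ n, r * a n := sum_le_sum fun n _ => (hr n).1
      _ = r := by rw [← mul_sum, hsum, mul_one]
    have hS : S = r * A := by
      rw [mul_sum]
      exact sum_congr rfl fun n hn => (hr n).2 (mem_filter.1 hn).2
    have hshare : ∀ n, A * c n / S = c n / r := fun n => by
      rw [hS]
      field_simp
    refine ⟨fun n hn => ?_, fun n hn => ?_⟩
    · rw [hshare, (hr n).2 (mem_filter.1 hn).2]
      field_simp
    · rw [hshare, div_le_iff₀ hr0, ← (mem_filter.1 hn).2, mul_comm]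
      exact (hr n).1
  · rintro ⟨hT, hTb⟩
    have hS : 0 < S := by
      refine (show 0 ≤ S from sum_nonneg fun i _ => hc i).lt_of_ne' fun h => ?_
      have := hT n₀ (by simpa)
      rw [h, div_zero] at this
      linarith
    have hactive : ∀ n, ε < a n → c n = S / A * a n := fun n hn => by
      rw [hT n (by simpa)]
      field_simp
    refine ⟨S / A, fun n => ⟨?_, hactive n⟩⟩
    rcases (ha n).lt_or_eq with hn | hn
    · exact (hactive n hn).le
    · have := hTb n (by simp [hn])
      rw [div_le_iff₀ hS, hn] at this
      rw [div_mul_eq_mul_div, le_div_iff₀ hA]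
      linarith

end

open Finset in
theorem stmt_9_general (N : ℕ) (c : Fin N → ℝ) (hc : ∀ n, 0 ≤ c n)
    (hcs : 0 < ∑ n, c n) (ε : ℝ) (hε : 0 < ε) (hNε : (N : ℝ) * ε < 1)
    (a : Fin N → ℝ) (ha : ∀ n, ε ≤ a n) (hsum : ∑ n, a n = 1) :
    (∀ b : Fin N → ℝ, (∀ n, ε ≤ b n) → (∑ n, b n = 1) →
        ∑ n, b n * Real.log (1 + c n / b n) ≤ ∑ n, a n * Real.log (1 + c n / a n))
      ↔ ((∀ n ∈ univ.filter (fun i => ε < a i),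
            a n = (1 - ((univ.filter (fun i => a i = ε)).card : ℝ) * ε) * c n /
              ∑ i ∈ univ.filter (fun i => ε < a i), c i) ∧
         (∀ n ∈ univ.filter (fun i => a i = ε),
            (1 - ((univ.filter (fun i => a i = ε)).card : ℝ) * ε) * c n /
              ∑ i ∈ univ.filter (fun i => ε < a i), c i ≤ ε)) := by
  obtain ⟨n, hn⟩ := exists_lt_of_sum_eq_one hsum (by simpa using hNε)
  exact (isRateOptimal_iff_exists_isWaterLevel hc hε ha hsum hn).trans
    (exists_isWaterLevel_iff hc hcs hε ha hsum hn)

open Finset in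
/-- Theorem 4 (bandwidth fitting characterization): on the ε-restricted simplex,
`a` maximizes the single-slot sum rate iff every `n` with `a n > ε` gets bandwidth
proportional to `c n` (with the minimal-bandwidth indices subtracted) and every
minimally allocated `n` would only deserve at most `ε`. -/
theorem stmt_9 (N : ℕ) (hN : 1 ≤ N) (c : Fin N → ℝ) (hc : ∀ n, 0 ≤ c n)
    (hcs : 0 < ∑ n, c n) (ε : ℝ) (hε : 0 < ε) (hNε : (N : ℝ) * ε < 1)
    (a : Fin N → ℝ) (ha : ∀ n, ε ≤ a n) (hsum : ∑ n, a n = 1) :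
    (∀ b : Fin N → ℝ, (∀ n, ε ≤ b n) → (∑ n, b n = 1) →
        ∑ n, b n * Real.log (1 + c n / b n) ≤ ∑ n, a n * Real.log (1 + c n / a n))
      ↔ ((∀ n ∈ univ.filter (fun i => ε < a i),
            a n = (1 - ((univ.filter (fun i => a i = ε)).card : ℝ) * ε) * c n /
              ∑ i ∈ univ.filter (fun i => ε < a i), c i) ∧
         (∀ n ∈ univ.filter (fun i => a i = ε),
            (1 - ((univ.filter (fun i => a i = ε)).card : ℝ) * ε) * c n /
              ∑ i ∈ univ.filter (fun i => ε < a i), c i ≤ ε)) :=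
  stmt_9_general N c hc hcs ε hε hNε a ha hsum
end

section
/- Let ε > 0, let m ≥ 0 be a real number, and let 0 ≤ c < S be real numbers. If c·(1 − m·ε)/S ≤ ε, then c·(1 − (m+1)·ε)/(S − c) ≤ ε. -/
theorem stmt_10_general (ε m c S : ℝ) (hc : 0 ≤ c) (hcS : c < S)
    (h : c * (1 - m * ε) / S ≤ ε) :
    c * (1 - (m + 1) * ε) / (S - c) ≤ ε := by
  rw [div_le_iff₀ (hc.trans_lt hcS)] at h
  rw [div_le_iff₀ (sub_pos.2 hcS)]
  -- Once denominators are cleared, both inequalities say `c * (1 - m * ε) ≤ ε * S`.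
  calc c * (1 - (m + 1) * ε) = c * (1 - m * ε) - ε * c := by ring
    _ ≤ ε * S - ε * c := by gcongr
    _ = ε * (S - c) := by ring

/-- Key algebraic step in the proof of Proposition 2: moving an index with received
power `c` from the active set (total power `S`, with `m` minimal indices) to the
minimal-bandwidth set preserves the minimal-bandwidth condition. -/
theorem stmt_10 (ε m c S : ℝ) (hε : 0 < ε) (hm : 0 ≤ m) (hc : 0 ≤ c) (hcS : c < S)
    (h : c * (1 - m * ε) / S ≤ ε) :
    c * (1 - (m + 1) * ε) / (S - c) ≤ ε :=
  stmt_10_general ε m c S hc hcS h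
end

section
/- (Block-coordinate optimality implies global optimality for concave objectives, the content of Theorem 1.) Let ι be a finite index type, let E_i (i ∈ ι) be real normed vector spaces, let C_i ⊆ E_i be convex sets, let C = {x ∈ Π_i E_i : x_i ∈ C_i for all i}, and let f : (Π_i E_i) → ℝ be concave on C. Let x ∈ C and suppose f is differentiable at x. If for every index i and every y_i ∈ C_i, f(x updated with y_i in coordinate block i) ≤ f(x), then f(y) ≤ f(x) for all y ∈ C, i.e., x is a global maximizer of f over C. -/
/-!
At a point `x` of the product set, the block-optimality of each `x i` makes every
block-directional derivative `f' (Pi.single i (y i - x i))` nonpositive. Since `y - x` is the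
sum of its blocks, linearity of `f'` gives `f' (y - x) ≤ 0`, and the gradient inequality of a
concave function, `f y ≤ f x + f' (y - x)`, concludes.
-/

open Function

section GradientInequality

variable {E : Type*} [NormedAddCommGroup E] [NormedSpace ℝ E]
  {s : Set E} {f : E → ℝ} {f' : E →L[ℝ] ℝ} {x y : E}

theorem ConcaveOn.le_add_fderiv_sub (hf : ConcaveOn ℝ s f) (hx : x ∈ s) (hy : y ∈ s)
    (hf' : HasFDerivAt f f' x) : f y ≤ f x + f' (y - x) := by
  have hline : ConcaveOn ℝ (AffineMap.lineMap x y ⁻¹' s) (f ∘ AffineMap.lineMap x y) :=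
    hf.comp_affineMap _
  have hderiv : HasDerivAt (f ∘ AffineMap.lineMap x y) (f' (y - x)) (0 : ℝ) := by
    have hf'0 : HasFDerivAt f f' (AffineMap.lineMap x y (0 : ℝ)) := by simpa using hf'
    exact hf'0.comp_hasDerivAt 0 AffineMap.hasDerivAt_lineMap
  have hslope := hline.slope_le_of_hasDerivAt (x := 0) (y := 1)
    (by simpa using hx) (by simpa using hy) zero_lt_one hderiv
  simp only [slope_def_field, comp_apply, AffineMap.lineMap_apply_zero,
    AffineMap.lineMap_apply_one, sub_zero, div_one] at hslope
  linarith

theorem IsMaxOn.fderiv_sub_nonpos (h : IsMaxOn f s x) (hf' : HasFDerivAt f f' x)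
    (hxy : segment ℝ x y ⊆ s) : f' (y - x) ≤ 0 :=
  h.localize.hasFDerivWithinAt_nonpos hf'.hasFDerivWithinAt
    (sub_mem_posTangentConeAt_of_segment_subset hxy)

end GradientInequality

section Blocks

variable {ι : Type*} [DecidableEq ι] {E : ι → Type*}

theorem Pi.update_sub_self [∀ i, AddGroup (E i)] (x : ∀ i, E i) (i : ι) (w : E i) :
    update x i w - x = Pi.single i (w - x i) := by
  ext j
  by_cases hj : j = i
  · subst hj
    simp
  · simp [hj]

variable [Fintype ι] [∀ i, NormedAddCommGroup (E i)] [∀ i, NormedSpace ℝ (E i)]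

theorem fderiv_single_nonpos_of_update_le {f : (∀ i, E i) → ℝ}
    {f' : (∀ i, E i) →L[ℝ] ℝ} {x : ∀ i, E i} {i : ι} {Ci : Set (E i)} (hCi : Convex ℝ Ci)
    (hxi : x i ∈ Ci) (hf' : HasFDerivAt f f' x) (hmax : ∀ w ∈ Ci, f (update x i w) ≤ f x)
    {w : E i} (hw : w ∈ Ci) : f' (Pi.single i (w - x i)) ≤ 0 := by
  have hIsMax : IsMaxOn f (update x i '' Ci) x := by
    rintro _ ⟨v, hv, rfl⟩
    exact hmax v hv
  have hseg : segment ℝ x (update x i w) ⊆ update x i '' Ci := by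
    have himage := Pi.image_update_segment (𝕜 := ℝ) i (x i) w x
    rw [update_eq_self] at himage
    exact himage ▸ Set.image_mono (hCi.segment_subset hxi hw)
  rw [← Pi.update_sub_self]
  exact hIsMax.fderiv_sub_nonpos hf' hseg

end Blocks

/-- Block-coordinate optimality implies global optimality for a concave,
differentiable objective over a product of convex sets (Theorem 1 of the paper). -/
theorem stmt_11 {ι : Type*} [Fintype ι] [DecidableEq ι]
    (E : ι → Type*) [∀ i, NormedAddCommGroup (E i)] [∀ i, NormedSpace ℝ (E i)]
    (C : ∀ i, Set (E i)) (hC : ∀ i, Convex ℝ (C i))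
    (f : (∀ i, E i) → ℝ)
    (hf : ConcaveOn ℝ {x : ∀ i, E i | ∀ i, x i ∈ C i} f)
    (x : ∀ i, E i) (hx : ∀ i, x i ∈ C i)
    (hdiff : DifferentiableAt ℝ f x)
    (hblock : ∀ i, ∀ y ∈ C i, f (Function.update x i y) ≤ f x) :
    ∀ y : ∀ i, E i, (∀ i, y i ∈ C i) → f y ≤ f x := by
  intro y hy
  have hf' := hdiff.hasFDerivAt
  have hdir : fderiv ℝ f x (y - x) ≤ 0 := by
    rw [← Finset.univ_sum_single (y - x), map_sum]
    exact Finset.sum_nonpos fun i _ =>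
      fderiv_single_nonpos_of_update_le (hC i) (hx i) hf' (hblock i) (hy i)
  linarith [hf.le_add_fderiv_sub hx hy hf']
end

section
/- (KKT sufficiency for the energy allocation subproblem, the sufficiency direction of Theorem 3.) Let K ≥ 1; let a_k > 0 and H_k > 0 for k = 1, …, K; let Ẽ_1 ≤ Ẽ_2 ≤ … ≤ Ẽ_K be real numbers, B^max ≥ 0, and P > 0. Call p ∈ ℝ^K feasible if 0 ≤ p_k ≤ P for all k and Ẽ_k − B^max ≤ Σ_{κ=1}^k p_κ ≤ Ẽ_k for all k. Suppose p is feasible and there exist λ_k ≥ 0 and μ_k ≥ 0 (k = 1, …, K) such that, with v_k = Σ_{κ=k}^K λ_κ and u_k = Σ_{κ=k}^K μ_κ: (i) v_k − u_k > 0 for all k; (ii) λ_k·(Σ_{κ=1}^k p_κ − Ẽ_k) = 0 for all k; (iii) μ_k·(Σ_{κ=1}^k p_κ − Ẽ_k + B^max) = 0 for all k; and (iv) p_k = min(P, a_k·max(1/(v_k − u_k) − 1/H_k, 0)) for all k. Then for every feasible q ∈ ℝ^K, Σ_{k=1}^K a_k·log(1 + q_k H_k/a_k) ≤ Σ_{k=1}^K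 a_k·log(1 + p_k H_k/a_k). -/
/-!
Weak duality. The rate `x ↦ a log (1 + x H / a)` is concave, so it lies below its tangent,
whose slope at `p` is the marginal rate `a H / (a + p H)`. The water-filling rule makes the
marginal rate at most the water level `w = v - u` where `p` is below the cap and at least `w`
where `p` is positive, so each term gains at most `w k (q k - p k)` when `p` is replaced by `q`.
Summation by parts turns `∑ w k (q k - p k)` into `∑ (λ k - μ k)` times the cumulative
differences, and complementary slackness makes each of those terms nonpositive.
-/

open Finset

theorem mul_log_one_add_sub_le {a H p q : ℝ} (ha : 0 < a) (hH : 0 < H) (hp : 0 ≤ p)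
    (hq : 0 ≤ q) :
    a * Real.log (1 + q * H / a) - a * Real.log (1 + p * H / a)
      ≤ a * H / (a + p * H) * (q - p) := by
  have hx : 0 < 1 + p * H / a := by positivity
  have hy : 0 < 1 + q * H / a := by positivity
  have hratio : (1 + q * H / a) / (1 + p * H / a) - 1 = (q - p) * H / (a + p * H) := by
    field_simp
    ring
  have hlog := Real.log_le_sub_one_of_pos (div_pos hy hx)
  rw [Real.log_div hy.ne' hx.ne', hratio] at hlog
  calc a * Real.log (1 + q * H / a) - a * Real.log (1 + p * H / a)
      = a * (Real.log (1 + q * H / a) - Real.log (1 + p * H / a)) := by ring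
    _ ≤ a * ((q - p) * H / (a + p * H)) := mul_le_mul_of_nonneg_left hlog ha.le
    _ = a * H / (a + p * H) * (q - p) := by ring

section WaterFilling

variable {a H w P p : ℝ}

theorem marginalRate_le_of_lt_cap (ha : 0 < a) (hH : 0 < H) (hw : 0 < w)
    (hp : p = min P (a * max (1 / w - 1 / H) 0)) (hpP : p < P) :
    a * H / (a + p * H) ≤ w := by
  have hp' : p = a * max (1 / w - 1 / H) 0 := by
    rcases min_choice P (a * max (1 / w - 1 / H) 0) with h | h <;> rw [h] at hp
    · exact absurd hp hpP.ne
    · exact hp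
  have hp0 : 0 ≤ p := hp' ▸ by positivity
  have hlevel : a * (1 / w - 1 / H) ≤ p :=
    hp' ▸ mul_le_mul_of_nonneg_left (le_max_left _ _) ha.le
  rw [div_le_iff₀ (by positivity)]
  have hwater : a * H ≤ w * a + w * (a * (1 / w - 1 / H)) * H := by
    field_simp
    linarith
  nlinarith [mul_le_mul_of_nonneg_left hlevel (mul_pos hw hH).le]

theorem le_marginalRate_of_pos (ha : 0 < a) (hH : 0 < H) (hw : 0 < w)
    (hp : p = min P (a * max (1 / w - 1 / H) 0)) (hp0 : 0 < p) :
    w ≤ a * H / (a + p * H) := by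
  have hle : p ≤ a * max (1 / w - 1 / H) 0 := hp ▸ min_le_right _ _
  have hmax : max (1 / w - 1 / H) 0 = 1 / w - 1 / H := by
    refine max_eq_left (not_lt.mp fun h => ?_)
    rw [max_eq_right h.le, mul_zero] at hle
    linarith
  rw [hmax] at hle
  rw [le_div_iff₀ (by positivity)]
  have hwater : w * a + w * (a * (1 / w - 1 / H)) * H = a * H := by
    field_simp
    ring
  nlinarith [mul_le_mul_of_nonneg_left hle (mul_pos hw hH).le]

theorem mul_log_one_add_sub_le_of_waterFilling (ha : 0 < a) (hH : 0 < H) (hw : 0 < w)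
    (hp : p = min P (a * max (1 / w - 1 / H) 0)) {q : ℝ} (hq : 0 ≤ q) (hqP : q ≤ P) :
    a * Real.log (1 + q * H / a) - a * Real.log (1 + p * H / a) ≤ w * (q - p) := by
  have hp0 : 0 ≤ p := hp ▸ le_min (hq.trans hqP) (by positivity)
  refine (mul_log_one_add_sub_le ha hH hp0 hq).trans ?_
  rcases lt_trichotomy q p with hlt | heq | hgt
  · exact mul_le_mul_of_nonpos_right
      (le_marginalRate_of_pos ha hH hw hp (hq.trans_lt hlt)) (sub_nonpos.mpr hlt.le)
  · simp [heq]
  · exact mul_le_mul_of_nonneg_right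
      (marginalRate_le_of_lt_cap ha hH hw hp (hgt.trans_le hqP)) (sub_nonneg.mpr hgt.le)

end WaterFilling

section SummationByParts

variable {ι R : Type*} [Fintype ι] [Preorder ι] [LocallyFiniteOrderTop ι]
  [LocallyFiniteOrderBot ι]

theorem sum_sum_Ici_mul [NonUnitalNonAssocSemiring R] (c d : ι → R) :
    ∑ k, (∑ κ ∈ Ici k, c κ) * d k = ∑ κ, c κ * ∑ k ∈ Iic κ, d k := by
  simp_rw [sum_mul, mul_sum]
  exact sum_comm' (by simp [and_comm])

theorem sum_tail_sub_mul_sub_nonpos {E : ι → ℝ} {B : ℝ} {p q lam mu : ι → ℝ}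
    (hlam : ∀ k, 0 ≤ lam k) (hmu : ∀ k, 0 ≤ mu k)
    (hcs1 : ∀ k, lam k * ((∑ κ ∈ Iic k, p κ) - E k) = 0)
    (hcs2 : ∀ k, mu k * ((∑ κ ∈ Iic k, p κ) - E k + B) = 0)
    (hq : ∀ k, E k - B ≤ ∑ κ ∈ Iic k, q κ ∧ ∑ κ ∈ Iic k, q κ ≤ E k) :
    ∑ k, ((∑ κ ∈ Ici k, lam κ) - ∑ κ ∈ Ici k, mu κ) * (q k - p k) ≤ 0 := by
  simp_rw [← sum_sub_distrib, sum_sum_Ici_mul]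
  refine sum_nonpos fun k _ => ?_
  rw [sum_sub_distrib]
  nlinarith [hcs1 k, hcs2 k, mul_nonneg (hlam k) (sub_nonneg.mpr (hq k).2),
    mul_nonneg (hmu k) (sub_nonneg.mpr (hq k).1)]

end SummationByParts

open Finset in
theorem stmt_17_general (K : ℕ) (a H : Fin K → ℝ)
    (ha : ∀ k, 0 < a k) (hH : ∀ k, 0 < H k)
    (Etil : Fin K → ℝ) (Bmax : ℝ)
    (P : ℝ)
    (p : Fin K → ℝ)
    (lam mu : Fin K → ℝ) (hlam : ∀ k, 0 ≤ lam k) (hmu : ∀ k, 0 ≤ mu k)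
    (hpos : ∀ k, 0 < (∑ κ ∈ Ici k, lam κ) - (∑ κ ∈ Ici k, mu κ))
    (hcs1 : ∀ k, lam k * ((∑ κ ∈ Iic k, p κ) - Etil k) = 0)
    (hcs2 : ∀ k, mu k * ((∑ κ ∈ Iic k, p κ) - Etil k + Bmax) = 0)
    (hwf : ∀ k, p k = min P (a k *
      max (1 / ((∑ κ ∈ Ici k, lam κ) - (∑ κ ∈ Ici k, mu κ)) - 1 / H k) 0)) :
    ∀ q : Fin K → ℝ,
      ((∀ k, 0 ≤ q k ∧ q k ≤ P) ∧
        ∀ k, Etil k - Bmax ≤ ∑ κ ∈ Iic k, q κ ∧ ∑ κ ∈ Iic k, q κ ≤ Etil k) →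
      ∑ k, a k * Real.log (1 + q k * H k / a k)
        ≤ ∑ k, a k * Real.log (1 + p k * H k / a k) := by
  rintro q ⟨hqbox, hqcum⟩
  have hterm := fun k => mul_log_one_add_sub_le_of_waterFilling (ha k) (hH k) (hpos k) (hwf k)
    (hqbox k).1 (hqbox k).2
  have hsum := sum_le_sum fun k (_ : k ∈ univ) => hterm k
  rw [sum_sub_distrib] at hsum
  linarith [sum_tail_sub_mul_sub_nonpos hlam hmu hcs1 hcs2 hqcum]

open Finset in
/-- KKT sufficiency for the energy allocation subproblem (sufficiency direction of
Theorem 3): a feasible `p` satisfying the discounted water-filling rule together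
with complementary slackness for the battery constraints maximizes the total rate
over the feasible set. -/
theorem stmt_17 (K : ℕ) (hK : 1 ≤ K) (a H : Fin K → ℝ)
    (ha : ∀ k, 0 < a k) (hH : ∀ k, 0 < H k)
    (Etil : Fin K → ℝ) (hE : Monotone Etil) (Bmax : ℝ) (hB : 0 ≤ Bmax)
    (P : ℝ) (hP : 0 < P)
    (p : Fin K → ℝ)
    (hfeas : (∀ k, 0 ≤ p k ∧ p k ≤ P) ∧
      ∀ k, Etil k - Bmax ≤ ∑ κ ∈ Iic k, p κ ∧ ∑ κ ∈ Iic k, p κ ≤ Etil k)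
    (lam mu : Fin K → ℝ) (hlam : ∀ k, 0 ≤ lam k) (hmu : ∀ k, 0 ≤ mu k)
    (hpos : ∀ k, 0 < (∑ κ ∈ Ici k, lam κ) - (∑ κ ∈ Ici k, mu κ))
    (hcs1 : ∀ k, lam k * ((∑ κ ∈ Iic k, p κ) - Etil k) = 0)
    (hcs2 : ∀ k, mu k * ((∑ κ ∈ Iic k, p κ) - Etil k + Bmax) = 0)
    (hwf : ∀ k, p k = min P (a k *
      max (1 / ((∑ κ ∈ Ici k, lam κ) - (∑ κ ∈ Ici k, mu κ)) - 1 / H k) 0)) :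
    ∀ q : Fin K → ℝ,
      ((∀ k, 0 ≤ q k ∧ q k ≤ P) ∧
        ∀ k, Etil k - Bmax ≤ ∑ κ ∈ Iic k, q κ ∧ ∑ κ ∈ Iic k, q κ ≤ Etil k) →
      ∑ k, a k * Real.log (1 + q k * H k / a k)
        ≤ ∑ k, a k * Real.log (1 + p k * H k / a k) :=
  stmt_17_general K a H ha hH Etil Bmax P p lam mu hlam hmu hpos hcs1 hcs2 hwf
end
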